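/- arXiv:2106.13046 — 10 statements merged into one kernel-verified Lean document; each statement's English description precedes it below -/
import Mathlib

section
/- Every linear operator J on the space of polynomials over ℂ that does not increase degree (deg J(p) ≤ deg p for all nonzero p) can be written uniquely in the form J = Σ_{ν≥0} (a_ν(x)/ν!) D^ν with polynomials a_ν satisfying deg a_ν ≤ ν. -/
/-!
With `hasseDeriv ν = D^ν / ν!`, evaluating `J = ∑ a ν * hasseDeriv ν` on `X ^ n` gives
`J (X ^ n) = a n + ∑_{ν < n} a ν * hasseDeriv ν (X ^ n)`, a triangular system that determines
`a n` recursively from `J (X ^ n)` and `a 0, …, a (n - 1)`; both sides being linear, agreement on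
monomials is agreement everywhere. If `J` does not raise degrees, every term of the recursion has
degree `≤ n`, so `deg (a n) ≤ n` by strong induction.
-/

open Polynomial Finset

namespace Polynomial

variable {R : Type*} [CommRing R]

theorem linearMap_apply_eq_of_X_pow {M : Type*} [AddCommMonoid M] [Module R M]
    {f g : R[X] →ₗ[R] M} {N : ℕ} (h : ∀ k < N, f (X ^ k) = g (X ^ k))
    {p : R[X]} (hp : p.natDegree < N) : f p = g p := by
  rw [p.as_sum_range' N hp]
  simp only [map_sum]
  refine sum_congr rfl fun k hk => ?_
  rw [← C_mul_X_pow_eq_monomial, ← smul_eq_C_mul, map_smul, map_smul, h k (mem_range.1 hk)]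

theorem sum_range_mul_hasseDeriv_of_natDegree_lt (a : ℕ → R[X]) {p : R[X]} {N : ℕ}
    (hp : p.natDegree < N) :
    ∑ ν ∈ range N, a ν * hasseDeriv ν p = ∑ ν ∈ range (p.natDegree + 1), a ν * hasseDeriv ν p := by
  refine (sum_subset (range_subset_range.2 hp) fun ν _ hν => ?_).symm
  rw [hasseDeriv_eq_zero_of_lt_natDegree p ν (by simpa using hν), mul_zero]

theorem hasseDeriv_X_pow_self (n : ℕ) : hasseDeriv n ((X : R[X]) ^ n) = 1 := by
  simp [X_pow_eq_monomial, hasseDeriv_monomial]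

theorem degree_hasseDeriv_X_pow_le (ν n : ℕ) :
    (hasseDeriv ν ((X : R[X]) ^ n)).degree ≤ ↑(n - ν) := by
  rw [X_pow_eq_monomial, hasseDeriv_monomial]
  exact degree_monomial_le _ _

noncomputable def diffOpCoeff (J : R[X] →ₗ[R] R[X]) (n : ℕ) : R[X] :=
  J (X ^ n) - ∑ ν ∈ (range n).attach, diffOpCoeff J ν * hasseDeriv ν (X ^ n)
decreasing_by exact mem_range.1 ν.2

theorem diffOpCoeff_eq (J : R[X] →ₗ[R] R[X]) (n : ℕ) :
    diffOpCoeff J n = J (X ^ n) - ∑ ν ∈ range n, diffOpCoeff J ν * hasseDeriv ν (X ^ n) := by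
  rw [diffOpCoeff, sum_attach (range n) fun ν => diffOpCoeff J ν * hasseDeriv ν (X ^ n)]

theorem map_X_pow_eq_sum_diffOpCoeff (J : R[X] →ₗ[R] R[X]) (n : ℕ) :
    J (X ^ n) = ∑ ν ∈ range (n + 1), diffOpCoeff J ν * hasseDeriv ν (X ^ n) := by
  rw [sum_range_succ, diffOpCoeff_eq, hasseDeriv_X_pow_self, mul_one, add_sub_cancel]

theorem degree_diffOpCoeff_le {J : R[X] →ₗ[R] R[X]} (hJ : ∀ p, (J p).degree ≤ p.degree) (n : ℕ) :
    (diffOpCoeff J n).degree ≤ n := by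
  induction n using Nat.strong_induction_on with
  | _ n ih =>
    rw [diffOpCoeff_eq]
    refine (degree_sub_le _ _).trans (max_le ((hJ _).trans (degree_X_pow_le n)) ?_)
    refine (degree_sum_le _ _).trans (Finset.sup_le fun ν hν => ?_)
    have hνn := mem_range.1 hν
    calc (diffOpCoeff J ν * hasseDeriv ν (X ^ n)).degree
        ≤ (ν : WithBot ℕ) + ↑(n - ν) :=
          (degree_mul_le _ _).trans (add_le_add (ih ν hνn) (degree_hasseDeriv_X_pow_le ν n))
      _ = n := by norm_cast; omega

theorem map_eq_sum_diffOpCoeff (J : R[X] →ₗ[R] R[X]) (p : R[X]) :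
    J p = ∑ ν ∈ range (p.natDegree + 1), diffOpCoeff J ν * hasseDeriv ν p := by
  let L : R[X] →ₗ[R] R[X] :=
    ∑ ν ∈ range (p.natDegree + 1), LinearMap.mulLeft R (diffOpCoeff J ν) ∘ₗ hasseDeriv ν
  have hL : ∀ q, L q = ∑ ν ∈ range (p.natDegree + 1), diffOpCoeff J ν * hasseDeriv ν q := by
    intro q; simp [L, LinearMap.sum_apply]
  rw [← hL]
  refine linearMap_apply_eq_of_X_pow (fun k hk => ?_) (Nat.lt_succ_self _)
  have hXk := natDegree_X_pow_le (R := R) k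
  rw [hL, map_X_pow_eq_sum_diffOpCoeff,
    sum_range_mul_hasseDeriv_of_natDegree_lt _ (hXk.trans_lt hk),
    sum_range_mul_hasseDeriv_of_natDegree_lt _ (Nat.lt_succ_of_le hXk)]

theorem eq_diffOpCoeff_of_map_X_pow {J : R[X] →ₗ[R] R[X]} {a : ℕ → R[X]}
    (ha : ∀ n, J (X ^ n) = ∑ ν ∈ range (n + 1), a ν * hasseDeriv ν (X ^ n)) :
    a = diffOpCoeff J := by
  funext n
  induction n using Nat.strong_induction_on with
  | _ n ih =>
    rw [diffOpCoeff_eq, ha, sum_range_succ, hasseDeriv_X_pow_self, mul_one,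
      sum_congr rfl fun ν hν => by rw [ih ν (mem_range.1 hν)], add_sub_cancel_left]

theorem inv_factorial_smul_mul_iterate_derivative {K : Type*} [Field K] [CharZero K]
    (ν : ℕ) (a p : K[X]) :
    (ν.factorial : K)⁻¹ • (a * derivative^[ν] p) = a * hasseDeriv ν p := by
  rw [← factorial_smul_hasseDeriv, LinearMap.smul_apply, mul_smul_comm,
    ← Nat.cast_smul_eq_nsmul K, inv_smul_smul₀ (Nat.cast_ne_zero.2 ν.factorial_ne_zero)]

theorem existsUnique_hasseDeriv_expansion {J : R[X] →ₗ[R] R[X]}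
    (hJ : ∀ p, (J p).degree ≤ p.degree) :
    ∃! a : ℕ → R[X], (∀ ν, (a ν).degree ≤ ν) ∧
      ∀ p, J p = ∑ ν ∈ range (p.natDegree + 1), a ν * hasseDeriv ν p := by
  refine ⟨diffOpCoeff J, ⟨degree_diffOpCoeff_le hJ, map_eq_sum_diffOpCoeff J⟩, ?_⟩
  rintro a ⟨-, ha⟩
  refine eq_diffOpCoeff_of_map_X_pow fun n => (ha _).trans ?_
  exact (sum_range_mul_hasseDeriv_of_natDegree_lt a (Nat.lt_succ_of_le (natDegree_X_pow_le n))).symm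

end Polynomial

theorem stmt4 (J : Polynomial ℂ →ₗ[ℂ] Polynomial ℂ)
    (hJ : ∀ p : Polynomial ℂ, (J p).degree ≤ p.degree) :
    ∃! a : ℕ → Polynomial ℂ, (∀ ν, (a ν).degree ≤ (ν : ℕ)) ∧
      ∀ p, J p = ∑ ν ∈ Finset.range (p.natDegree + 1),
        ((Nat.factorial ν : ℂ))⁻¹ • (a ν * Polynomial.derivative^[ν] p) := by
  simp_rw [inv_factorial_smul_mul_iterate_derivative]
  exact existsUnique_hasseDeriv_expansion hJ
end

section
/- Let J = Σ_{ν≥0} (a_ν(x)/ν!) D^ν with deg a_ν ≤ ν, and write a_ν(x) = Σ_{i=0}^{ν} a_i^{[ν]} x^i. Then J is an isomorphism of the polynomial space if and only if Σ_{μ=0}^{n} C(n,μ) a_μ^{[μ]} ≠ 0 for every n ≥ 0. -/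
/-!
In the monomial basis `J` is triangular: if `deg p ≤ n`, the coefficient of `x^n` in `J p` is
`c n * p_n` with `c n = ∑_{μ ≤ n} C(n, μ) a_μ^{[μ]}`, because `deg a_ν ≤ ν` lets only the top
coefficient of `a_ν` meet the coefficient of `x^(n-ν)` in `D^ν p`. So `J` does not raise degrees
and has diagonal `c`. Looking at leading coefficients, such a map is injective iff no `c n`
vanishes; and an injective map that does not raise degrees is surjective, since it restricts to
injective, hence surjective, endomorphisms of the finite-dimensional spaces of polynomials of
degree `< n`.
-/

open Polynomial Finset Function

namespace Polynomial

theorem coeff_mul_iterate_derivative_of_natDegree_le {R : Type*} [Semiring R] {b p : R[X]}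
    {ν n : ℕ} (hb : b.natDegree ≤ ν) (hp : p.natDegree ≤ n) (hν : ν ≤ n) :
    (b * derivative^[ν] p).coeff n = b.coeff ν * n.descFactorial ν * p.coeff n := by
  obtain ⟨k, rfl⟩ := Nat.exists_eq_add_of_le hν
  rw [coeff_mul_add_eq_of_natDegree_le hb ((natDegree_iterate_derivative p ν).trans (by omega)),
    coeff_iterate_derivative, add_comm k ν, nsmul_eq_mul, mul_assoc]

section DiffOp

variable {K : Type*} [Field K] [CharZero K]

noncomputable def diffOp (a : ℕ → K[X]) (p : K[X]) : K[X] :=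
  ∑ ν ∈ range (p.natDegree + 1), (ν.factorial : K)⁻¹ • (a ν * derivative^[ν] p)

def diagCoeff (a : ℕ → K[X]) (n : ℕ) : K :=
  ∑ μ ∈ range (n + 1), (n.choose μ : K) * (a μ).coeff μ

theorem coeff_diffOp {a : ℕ → K[X]} (ha : ∀ ν, (a ν).natDegree ≤ ν) {p : K[X]} {n : ℕ}
    (hp : p.natDegree ≤ n) : (diffOp a p).coeff n = diagCoeff a n * p.coeff n := by
  have hvanish : ∀ ν ∈ range (n + 1), ν ∉ range (p.natDegree + 1) →
      ((ν.factorial : K)⁻¹ • (a ν * derivative^[ν] p)).coeff n = 0 := by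
    intro ν _ hν
    rw [iterate_derivative_eq_zero (by simpa using hν), mul_zero, smul_zero, coeff_zero]
  rw [diffOp, finsetSum_coeff, sum_subset (range_subset_range.2 (by omega)) hvanish,
    diagCoeff, sum_mul]
  refine sum_congr rfl fun ν hν => ?_
  rw [coeff_smul, coeff_mul_iterate_derivative_of_natDegree_le (ha ν) hp
    (Nat.lt_succ_iff.1 (mem_range.1 hν)), Nat.descFactorial_eq_factorial_mul_choose, smul_eq_mul]
  have : (ν.factorial : K) ≠ 0 := Nat.cast_ne_zero.2 ν.factorial_ne_zero
  push_cast
  field_simp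

end DiffOp

def IsTriangular {R : Type*} [Semiring R] (J : R[X] →ₗ[R] R[X]) (d : ℕ → R) : Prop :=
  ∀ p n, p.natDegree ≤ n → (J p).coeff n = d n * p.coeff n

theorem IsTriangular.degree_le {R : Type*} [Semiring R] {J : R[X] →ₗ[R] R[X]} {d : ℕ → R}
    (hJ : IsTriangular J d) (p : R[X]) : (J p).degree ≤ p.degree := by
  rw [degree_le_iff_coeff_zero]
  intro m hm
  rw [hJ p m (natDegree_le_of_degree_le hm.le), coeff_eq_zero_of_degree_lt hm, mul_zero]

section Field

variable {K : Type*} [Field K]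

theorem exists_natDegree_le_of_injective {J : K[X] →ₗ[K] K[X]}
    (hdeg : ∀ p, (J p).degree ≤ p.degree) (hinj : Injective J) (q : K[X]) :
    ∃ p, p.natDegree ≤ q.natDegree ∧ J p = q := by
  have hmaps : ∀ p ∈ K[X]_(q.natDegree + 1), J p ∈ K[X]_(q.natDegree + 1) :=
    fun p hp => mem_degreeLT.2 ((hdeg p).trans_lt (mem_degreeLT.1 hp))
  have hsurj : Surjective (J.restrict hmaps) :=
    LinearMap.injective_iff_surjective.1 fun x y hxy => Subtype.ext (hinj congr(($hxy).1))
  have hq : q ∈ K[X]_(q.natDegree + 1) := by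
    rw [degreeLT_succ_eq_degreeLE, mem_degreeLE]
    exact degree_le_natDegree
  obtain ⟨⟨p, hp⟩, hpq⟩ := hsurj ⟨q, hq⟩
  rw [degreeLT_succ_eq_degreeLE, mem_degreeLE] at hp
  exact ⟨p, natDegree_le_of_degree_le hp, congr(($hpq).1)⟩

namespace IsTriangular

variable {J : K[X] →ₗ[K] K[X]} {d : ℕ → K}

theorem injective_iff (hJ : IsTriangular J d) : Injective J ↔ ∀ n, d n ≠ 0 := by
  constructor
  · intro hinj n hn
    obtain ⟨p, hp, hpX⟩ := exists_natDegree_le_of_injective hJ.degree_le hinj (X ^ n)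
    have := hJ p n (by simpa using hp)
    rw [hpX, coeff_X_pow_self, hn, zero_mul] at this
    exact one_ne_zero this
  · intro hd
    rw [injective_iff_map_eq_zero]
    intro p hp
    by_contra hp0
    have := hJ p _ le_rfl
    rw [hp, coeff_zero] at this
    exact mul_ne_zero (hd _) (leadingCoeff_ne_zero.2 hp0) this.symm

theorem bijective_iff (hJ : IsTriangular J d) : Bijective J ↔ ∀ n, d n ≠ 0 := by
  refine ⟨fun hbij => hJ.injective_iff.1 hbij.1, fun hd => ?_⟩
  have hinj := hJ.injective_iff.2 hd
  exact ⟨hinj, fun q => (exists_natDegree_le_of_injective hJ.degree_le hinj q).imp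
    fun _ => And.right⟩

end IsTriangular

end Field

end Polynomial

theorem stmt5 (a : ℕ → Polynomial ℂ) (hdeg : ∀ ν, (a ν).degree ≤ (ν : ℕ))
    (J : Polynomial ℂ →ₗ[ℂ] Polynomial ℂ)
    (hJ : ∀ p, J p = ∑ ν ∈ Finset.range (p.natDegree + 1),
        ((Nat.factorial ν : ℂ))⁻¹ • (a ν * Polynomial.derivative^[ν] p)) :
    Function.Bijective J ↔
      ∀ n : ℕ, (∑ μ ∈ Finset.range (n + 1), (n.choose μ : ℂ) * (a μ).coeff μ) ≠ 0 := by
  have hT : IsTriangular J (diagCoeff a) := fun p n hp => by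
    rw [hJ]
    exact coeff_diffOp (fun ν => natDegree_le_of_degree_le (hdeg ν)) hp
  exact hT.bijective_iff
end

section
/- Let J = Σ_{n≥0}(a_n(x)/n!)D^n with deg a_n ≤ n, and for m ≥ 0 define J^(m) = Σ_{n≥0}(a_{n+m}(x)/n!)D^n. Then for any polynomials f and g: J(fg)(x) = Σ_{n≥0} J^(n)(f)(x) · g^(n)(x)/n! = Σ_{n≥0} J^(n)(g)(x) · f^(n)(x)/n!. -/
/-! Writing `(n!)⁻¹ • Dⁿ` as the Hasse derivative `Hₙ`, Leibniz' rule becomes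
`Hₖ (f g) = ∑_{i + j = k} Hᵢ f * Hⱼ g`. Hence `J (f g)` and `∑ₙ J⁽ⁿ⁾ f * Hₙ g` both equal
`∑_{i,j} a_{i+j} * Hᵢ f * Hⱼ g`, a finite sum since `Hᵢ f = 0` for `i > deg f`.
The second identity is the first one with `f` and `g` exchanged. -/

open Polynomial Finset
open scoped Nat

theorem Finset.sum_range_add_sum_antidiagonal {M : Type*} [AddCommMonoid M] (h : ℕ → ℕ → M)
    {A B : ℕ} (hA : ∀ i j, A ≤ i → h i j = 0) (hB : ∀ i j, B ≤ j → h i j = 0) :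
    ∑ k ∈ range (A + B), ∑ p ∈ antidiagonal k, h p.1 p.2 =
      ∑ i ∈ range A, ∑ j ∈ range B, h i j := by
  rw [← sum_product', ← sum_fiberwise_of_maps_to (g := fun p : ℕ × ℕ => p.1 + p.2)
    (t := range (A + B)) (by simp only [mem_product, mem_range]; omega)]
  refine sum_congr rfl fun k _ => ?_
  rw [← sum_filter_of_ne (p := (· ∈ range A ×ˢ range B))]
  · refine sum_congr ?_ fun _ _ => rfl
    ext
    simp only [mem_filter, HasAntidiagonal.mem_antidiagonal]
    tauto
  · rintro ⟨i, j⟩ _ hij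
    by_contra hmem
    simp only [mem_product, mem_range, not_and_or, not_lt] at hmem
    exact hij (hmem.elim (hA i j) (hB i j))

namespace Polynomial

variable {R : Type*} [Field R] [CharZero R]

theorem inv_factorial_smul_iterate_derivative (n : ℕ) (p : R[X]) :
    (n ! : R)⁻¹ • derivative^[n] p = hasseDeriv n p := by
  rw [← factorial_smul_hasseDeriv, LinearMap.smul_apply, ← Nat.cast_smul_eq_nsmul R, smul_smul,
    inv_mul_cancel₀ (Nat.cast_ne_zero.mpr n.factorial_ne_zero), one_smul]

/-- The paper's `J⁽ᵐ⁾ = ∑ₙ (aₙ₊ₘ / n!) Dⁿ`, truncated where `Dⁿ p` vanishes. -/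
noncomputable def shiftedDiffOp (a : ℕ → R[X]) (m : ℕ) (p : R[X]) : R[X] :=
  ∑ n ∈ range (p.natDegree + 1), (n ! : R)⁻¹ • (a (n + m) * derivative^[n] p)

variable (a : ℕ → R[X])

theorem shiftedDiffOp_eq_sum_hasseDeriv (m : ℕ) {p : R[X]} {N : ℕ} (hN : p.natDegree < N) :
    shiftedDiffOp a m p = ∑ n ∈ range N, a (n + m) * hasseDeriv n p := by
  simp only [shiftedDiffOp, ← mul_smul_comm, inv_factorial_smul_iterate_derivative]
  exact sum_subset (range_subset_range.mpr hN) fun n _ hn =>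
    by rw [hasseDeriv_eq_zero_of_lt_natDegree p n (by simpa using hn), mul_zero]

theorem shiftedDiffOp_zero_mul (f g : R[X]) :
    shiftedDiffOp a 0 (f * g) = ∑ i ∈ range (f.natDegree + 1), ∑ j ∈ range (g.natDegree + 1),
      a (i + j) * (hasseDeriv i f * hasseDeriv j g) := by
  have hdeg : (f * g).natDegree < f.natDegree + 1 + (g.natDegree + 1) := by
    have := natDegree_mul_le (p := f) (q := g); omega
  rw [shiftedDiffOp_eq_sum_hasseDeriv a 0 hdeg, ← sum_range_add_sum_antidiagonal]
  · refine sum_congr rfl fun k _ => ?_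
    rw [hasseDeriv_mul, mul_sum]
    exact sum_congr rfl fun p hp => by rw [HasAntidiagonal.mem_antidiagonal.mp hp, add_zero]
  · intro i j hi
    rw [hasseDeriv_eq_zero_of_lt_natDegree f i (by omega), zero_mul, mul_zero]
  · intro i j hj
    rw [hasseDeriv_eq_zero_of_lt_natDegree g j (by omega), mul_zero, mul_zero]

theorem shiftedDiffOp_zero_mul_eq_sum (f g : R[X]) :
    shiftedDiffOp a 0 (f * g) = ∑ n ∈ range (g.natDegree + 1),
      (n ! : R)⁻¹ • (shiftedDiffOp a n f * derivative^[n] g) := by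
  rw [shiftedDiffOp_zero_mul, sum_comm]
  refine sum_congr rfl fun n _ => ?_
  rw [← mul_smul_comm, inv_factorial_smul_iterate_derivative,
    shiftedDiffOp_eq_sum_hasseDeriv a n f.natDegree.lt_succ_self, sum_mul]
  exact sum_congr rfl fun i _ => by rw [mul_assoc]

end Polynomial

theorem stmt8_general (a : ℕ → Polynomial ℂ)
    (Jm : ℕ → Polynomial ℂ → Polynomial ℂ)
    (hJm : ∀ m p, Jm m p = ∑ n ∈ Finset.range (p.natDegree + 1),
        ((Nat.factorial n : ℂ))⁻¹ • (a (n + m) * Polynomial.derivative^[n] p))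
    (f g : Polynomial ℂ) :
    Jm 0 (f * g) = (∑ n ∈ Finset.range (g.natDegree + 1),
        ((Nat.factorial n : ℂ))⁻¹ • (Jm n f * Polynomial.derivative^[n] g)) ∧
    Jm 0 (f * g) = (∑ n ∈ Finset.range (f.natDegree + 1),
        ((Nat.factorial n : ℂ))⁻¹ • (Jm n g * Polynomial.derivative^[n] f)) := by
  obtain rfl : Jm = shiftedDiffOp a := funext₂ hJm
  exact ⟨shiftedDiffOp_zero_mul_eq_sum a f g,
    mul_comm f g ▸ shiftedDiffOp_zero_mul_eq_sum a g f⟩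

theorem stmt8 (a : ℕ → Polynomial ℂ) (hdeg : ∀ ν, (a ν).degree ≤ (ν : ℕ))
    (Jm : ℕ → Polynomial ℂ → Polynomial ℂ)
    (hJm : ∀ m p, Jm m p = ∑ n ∈ Finset.range (p.natDegree + 1),
        ((Nat.factorial n : ℂ))⁻¹ • (a (n + m) * Polynomial.derivative^[n] p))
    (f g : Polynomial ℂ) :
    Jm 0 (f * g) = (∑ n ∈ Finset.range (g.natDegree + 1),
        ((Nat.factorial n : ℂ))⁻¹ • (Jm n f * Polynomial.derivative^[n] g)) ∧
    Jm 0 (f * g) = (∑ n ∈ Finset.range (f.natDegree + 1),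
        ((Nat.factorial n : ℂ))⁻¹ • (Jm n g * Polynomial.derivative^[n] f)) :=
  stmt8_general a Jm hJm f g
end

section
/- Let J = Σ_{n≥0}(a_n(x)/n!)D^n with deg a_n ≤ n, acting also on the dual space via ᵗJ(u) = Σ_{n≥0}((−1)^n/n!)D^n(a_n u), and similarly J^(m)(u) = Σ_{n≥0}((−1)^n/n!)D^n(a_{n+m} u). Then for any polynomial f and any linear functional u: J(fu) = Σ_{n≥0} ((−1)^n/n!) f^(n)(x) J^(n)(u). -/
/-!
With the Hasse derivatives `Dₖ = (1/k!) dᵏ/dxᵏ`, write `J_a = ∑ₖ aₖ Dₖ` and `J_a^{(n)} = ∑ₖ aₖ₊ₙ Dₖ`.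
The Leibniz rule `Dₖ(gq) = ∑_{i+j=k} Dᵢg · Dⱼq` gives `J_a(gq) = ∑ᵢ Dᵢg · J_a^{(i)}(q)`. Applying it to
`g = Dₙf` and using `Dⱼ Dₙ = C(n+j, n) Dₙ₊ⱼ`, the sum `∑ₙ (-1)ⁿ J_a^{(n)}(Dₙf · p)` collapses to
`∑ₘ (∑_{n ≤ m} (-1)ⁿ C(m, n)) Dₘf · J_a^{(m)}(p) = f · J_a(p)`. Pairing with `u` gives the theorem.
-/

open Polynomial Finset

theorem Finset.sum_range_sum_range_sub_neg_one_pow_mul_choose_smul {S M : Type*} [Ring S]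
    [AddCommGroup M] [Module S M] (F : ℕ → M) {N : ℕ} (hN : 0 < N) :
    ∑ n ∈ range N, ∑ j ∈ range (N - n), ((-1 : S) ^ n * ((n + j).choose n : S)) • F (n + j)
      = F 0 := by
  have alternating (m : ℕ) :
      ∑ n ∈ range (m + 1), ((-1 : S) ^ n * ((n + (m - n)).choose n : S)) • F (n + (m - n))
        = if m = 0 then F 0 else 0 := by
    rw [sum_congr rfl fun n hn => by rw [Nat.add_sub_cancel' (Nat.lt_succ_iff.1 (mem_range.1 hn))],
      ← sum_smul]
    have h : ∑ n ∈ range (m + 1), (-1 : S) ^ n * (m.choose n : S) = if m = 0 then 1 else 0 := by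
      have hℤ := congrArg (Int.cast : ℤ → S) (Int.alternating_sum_range_choose (n := m))
      push_cast [apply_ite (Int.cast : ℤ → S)] at hℤ
      exact hℤ
    rw [h]
    split_ifs with hm <;> simp [hm]
  rw [← sum_range_diag_flip N fun n j => ((-1 : S) ^ n * ((n + j).choose n : S)) • F (n + j)]
  simp [alternating, hN]

namespace Polynomial

variable {R : Type*}

section Semiring

variable [Semiring R]

noncomputable def hasseDiffOp (a : ℕ → R[X]) (q : R[X]) : R[X] :=
  ∑ k ∈ range (q.natDegree + 1), a k * hasseDeriv k q

theorem hasseDiffOp_eq_sum_range (a : ℕ → R[X]) {q : R[X]} {N : ℕ} (hN : q.natDegree < N) :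
    hasseDiffOp a q = ∑ k ∈ range N, a k * hasseDeriv k q := by
  refine sum_subset (range_subset_range.2 hN) fun k _ hk => ?_
  rw [hasseDeriv_eq_zero_of_lt_natDegree q k (by rw [mem_range, not_lt] at hk; omega), mul_zero]

end Semiring

section CommSemiring

variable [CommSemiring R]

theorem hasseDiffOp_mul (a : ℕ → R[X]) (g q : R[X]) {N : ℕ} (hN : g.natDegree < N) :
    hasseDiffOp a (g * q) = ∑ i ∈ range N, hasseDeriv i g * hasseDiffOp (fun k => a (k + i)) q := by
  set e := q.natDegree
  calc hasseDiffOp a (g * q) = ∑ m ∈ range (N + e), a m * hasseDeriv m (g * q) :=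
        hasseDiffOp_eq_sum_range a (natDegree_mul_le.trans_lt (by omega))
    _ = ∑ m ∈ range (N + e), ∑ k ∈ range (m + 1),
          hasseDeriv k g * (a (m - k + k) * hasseDeriv (m - k) q) := by
        refine sum_congr rfl fun m _ => ?_
        rw [hasseDeriv_mul, Nat.sum_antidiagonal_eq_sum_range_succ
          (fun i j => hasseDeriv i g * hasseDeriv j q), mul_sum]
        refine sum_congr rfl fun k hk => ?_
        rw [Nat.sub_add_cancel (Nat.lt_succ_iff.1 (mem_range.1 hk))]
        ring
    _ = ∑ i ∈ range (N + e), ∑ j ∈ range (N + e - i),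
          hasseDeriv i g * (a (j + i) * hasseDeriv j q) :=
        sum_range_diag_flip _ fun i j => hasseDeriv i g * (a (j + i) * hasseDeriv j q)
    _ = ∑ i ∈ range N, hasseDeriv i g * hasseDiffOp (fun k => a (k + i)) q := by
        rw [← sum_subset (range_subset_range.2 (Nat.le_add_right N e)) fun i _ hi => ?_]
        · refine sum_congr rfl fun i hi => ?_
          rw [hasseDiffOp_eq_sum_range _ (by rw [mem_range] at hi; omega : e < N + e - i), mul_sum]
        · rw [hasseDeriv_eq_zero_of_lt_natDegree g i (by rw [mem_range, not_lt] at hi; omega)]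
          simp

theorem hasseDiffOp_smul (a : ℕ → R[X]) (c : R) (q : R[X]) :
    hasseDiffOp a (c • q) = c • hasseDiffOp a q := by
  rw [hasseDiffOp_eq_sum_range a ((natDegree_smul_le c q).trans_lt q.natDegree.lt_succ_self),
    hasseDiffOp, smul_sum]
  simp only [map_smul, mul_smul_comm]

end CommSemiring

theorem inv_factorial_smul_iterate_derivative_s9 {K : Type*} [Field K] [CharZero K] (k : ℕ)
    (q : K[X]) : ((k.factorial : K))⁻¹ • derivative^[k] q = hasseDeriv k q := by
  rw [← factorial_smul_hasseDeriv, LinearMap.smul_apply, ← Nat.cast_smul_eq_nsmul K, smul_smul,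
    inv_mul_cancel₀ (Nat.cast_ne_zero.2 k.factorial_ne_zero), one_smul]

section CommRing

variable [CommRing R]

theorem mul_hasseDiffOp_eq_sum (a : ℕ → R[X]) (f p : R[X]) :
    f * hasseDiffOp a p = ∑ n ∈ range (f.natDegree + 1),
      (-1 : R) ^ n • hasseDiffOp (fun k => a (k + n)) (hasseDeriv n f * p) := by
  set d := f.natDegree
  symm
  calc ∑ n ∈ range (d + 1), (-1 : R) ^ n • hasseDiffOp (fun k => a (k + n)) (hasseDeriv n f * p)
      = ∑ n ∈ range (d + 1), ∑ j ∈ range (d + 1 - n), ((-1 : R) ^ n * ((n + j).choose n : R)) •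
          (hasseDeriv (n + j) f * hasseDiffOp (fun k => a (k + (n + j))) p) := by
        refine sum_congr rfl fun n hn => ?_
        have hdeg : (hasseDeriv n f).natDegree < d + 1 - n :=
          (natDegree_hasseDeriv_le f n).trans_lt (by rw [mem_range] at hn; omega)
        rw [hasseDiffOp_mul _ _ _ hdeg, smul_sum]
        refine sum_congr rfl fun j _ => ?_
        rw [← LinearMap.comp_apply, hasseDeriv_comp, Nat.choose_symm_add]
        simp only [add_comm j n, add_assoc, mul_smul, LinearMap.smul_apply, smul_mul_assoc,
          Nat.cast_smul_eq_nsmul]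
    _ = f * hasseDiffOp a p := by
        rw [sum_range_sum_range_sub_neg_one_pow_mul_choose_smul
          (fun m => hasseDeriv m f * hasseDiffOp (fun k => a (k + m)) p) (Nat.succ_pos d)]
        simp

end CommRing

end Polynomial

theorem stmt9_general (a : ℕ → Polynomial ℂ)
    (Jm : ℕ → Polynomial ℂ → Polynomial ℂ)
    (hJm : ∀ m p, Jm m p = ∑ n ∈ Finset.range (p.natDegree + 1),
        ((Nat.factorial n : ℂ))⁻¹ • (a (n + m) * Polynomial.derivative^[n] p))
    (f : Polynomial ℂ) (u : Module.Dual ℂ (Polynomial ℂ)) :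
    ∀ p : Polynomial ℂ,
      u (f * Jm 0 p) = ∑ n ∈ Finset.range (f.natDegree + 1),
        ((-1 : ℂ) ^ n * ((Nat.factorial n : ℂ))⁻¹) *
          u (Jm n (Polynomial.derivative^[n] f * p)) := by
  have hJ (m : ℕ) (q : ℂ[X]) : Jm m q = hasseDiffOp (fun k => a (k + m)) q := by
    rw [hJm, hasseDiffOp]
    refine Finset.sum_congr rfl fun k _ => ?_
    rw [← mul_smul_comm, inv_factorial_smul_iterate_derivative_s9]
  intro p
  rw [hJ, mul_hasseDiffOp_eq_sum, map_sum]
  simp only [add_zero]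
  refine Finset.sum_congr rfl fun n _ => ?_
  rw [hJ, ← inv_factorial_smul_iterate_derivative_s9, smul_mul_assoc, hasseDiffOp_smul, map_smul,
    map_smul, smul_eq_mul, smul_eq_mul, mul_assoc]

/-- `J(fu) = Σ_{n≥0} ((−1)^n/n!) f^{(n)}(x) J^{(n)}(u)` : evaluated on a test polynomial `p`,
the left-hand side is `⟨fu, J(p)⟩ = ⟨u, f·J(p)⟩` and the `n`-th term of the right-hand side is
`((−1)^n/n!)⟨J^{(n)}(u), f^{(n)} p⟩ = ((−1)^n/n!)⟨u, J^{(n)}(f^{(n)} p)⟩`. -/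
theorem stmt9 (a : ℕ → Polynomial ℂ) (hdeg : ∀ ν, (a ν).degree ≤ (ν : ℕ))
    (Jm : ℕ → Polynomial ℂ → Polynomial ℂ)
    (hJm : ∀ m p, Jm m p = ∑ n ∈ Finset.range (p.natDegree + 1),
        ((Nat.factorial n : ℂ))⁻¹ • (a (n + m) * Polynomial.derivative^[n] p))
    (f : Polynomial ℂ) (u : Module.Dual ℂ (Polynomial ℂ)) :
    ∀ p : Polynomial ℂ,
      u (f * Jm 0 p) = ∑ n ∈ Finset.range (f.natDegree + 1),
        ((-1 : ℂ) ^ n * ((Nat.factorial n : ℂ))⁻¹) *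
          u (Jm n (Polynomial.derivative^[n] f * p)) :=
  stmt9_general a Jm hJm f u
end

section
/- Let J = Σ_{ν≥0}(a_ν(x)/ν!)D^ν with deg a_ν ≤ ν, and let k ≥ 0 be an integer. Then J satisfies: J(x^k) = a_0^{[k]} ≠ 0, deg(J(x^{n+k})) = n for all n ≥ 0, and J(x^i) = 0 for 0 ≤ i ≤ k−1, if and only if: (a) a_0 = ⋯ = a_{k−1} = 0; (b) deg a_ν ≤ ν − k for ν ≥ k; and (c) λ_{n+k}^{[k]} := Σ_{ν=0}^{n} C(n+k, n+k−ν) a_{n−ν}^{[n+k−ν]} ≠ 0 for all n ≥ 0. -/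
/-!
On monomials `J (X ^ m) = ∑_{ν ≤ m} (m choose ν) a_ν X ^ (m - ν)`, so the coefficient of `X ^ n`
in `J (X ^ (n + d))` only sees the `d`-th diagonal `i ↦ a_{d+i}^{[i]}`, through a unitriangular
binomial transform. Hence `J` kills `1, …, X ^ (k - 1)` and lowers all other degrees by at least
`k` exactly when the diagonals `d < k` vanish, which is (a) and (b); and then the top coefficient
of `J (X ^ (n + k))` is the `k`-th diagonal transform `λ_{n+k}^{[k]}`.
-/

open Polynomial Finset

theorem eq_zero_of_forall_sum_range_mul_eq_zero {R : Type*} [Semiring R] [NoZeroDivisors R]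
    {c : ℕ → ℕ → R} {f : ℕ → R} (hc : ∀ n, c n n ≠ 0)
    (h : ∀ n, ∑ i ∈ range (n + 1), c n i * f i = 0) (n : ℕ) : f n = 0 := by
  induction n using Nat.strong_induction_on with
  | _ n ih =>
    have hn := h n
    rw [sum_range_succ, sum_eq_zero fun i hi => by rw [ih i (mem_range.1 hi), mul_zero],
      zero_add] at hn
    exact (mul_eq_zero.1 hn).resolve_left (hc n)

def DegreeDropsBy {R : Type*} [Semiring R] (k : ℕ) (b : ℕ → R[X]) : Prop :=
  ∀ m j, m < j + k → (b m).coeff j = 0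

theorem degreeDropsBy_iff {R : Type*} [Semiring R] (k : ℕ) (b : ℕ → R[X]) :
    DegreeDropsBy k b ↔ (∀ m < k, b m = 0) ∧ ∀ m, k ≤ m → (b m).degree ≤ (m - k : ℕ) := by
  refine ⟨fun h => ⟨fun m hm => ext fun j => h m j (by omega), fun m _ => ?_⟩,
    fun ⟨hlt, hle⟩ m j hmj => ?_⟩
  · exact (degree_le_iff_coeff_zero _ _).2 fun j hj => h m j (by norm_cast at hj; omega)
  · rcases lt_or_ge m k with hm | hm
    · rw [hlt m hm, coeff_zero]
    · exact coeff_eq_zero_of_degree_lt ((hle m hm).trans_lt (by norm_cast; omega))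

section DiffOperator

variable {K : Type*} [Field K] [CharZero K]

/-- The operator `∑_ν (a_ν / ν!) D^ν`; its terms with `ν > deg p` vanish on `p`. -/
noncomputable def diffOperator (a : ℕ → K[X]) (p : K[X]) : K[X] :=
  ∑ ν ∈ range (p.natDegree + 1), ((ν.factorial : K))⁻¹ • (a ν * derivative^[ν] p)

theorem diffOperator_X_pow (a : ℕ → K[X]) (m : ℕ) :
    diffOperator a (X ^ m) = ∑ ν ∈ range (m + 1), (m.choose ν : K) • (a ν * X ^ (m - ν)) := by
  rw [diffOperator, natDegree_X_pow]
  refine sum_congr rfl fun ν _ => ?_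
  rw [iterate_derivative_X_pow_eq_smul, mul_smul_comm, smul_smul,
    Nat.descFactorial_eq_factorial_mul_choose]
  push_cast
  rw [inv_mul_cancel_left₀ (by exact_mod_cast ν.factorial_ne_zero)]

theorem coeff_diffOperator_X_pow_add (a : ℕ → K[X]) (n d : ℕ) :
    (diffOperator a (X ^ (n + d))).coeff n =
      ∑ i ∈ range (n + 1), ((n + d).choose (d + i) : K) * (a (d + i)).coeff i := by
  rw [diffOperator_X_pow, finsetSum_coeff, show n + d + 1 = d + (n + 1) by omega, sum_range_add,
    sum_eq_zero, zero_add]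
  · refine sum_congr rfl fun i hi => ?_
    rw [coeff_smul, coeff_mul_X_pow', if_pos (by omega), smul_eq_mul,
      show n - (n + d - (d + i)) = i by have := mem_range.1 hi; omega]
  · intro ν hν
    rw [coeff_smul, coeff_mul_X_pow', if_neg (by have := mem_range.1 hν; omega), smul_zero]

theorem coeff_diffOperator_X_pow_add' (a : ℕ → K[X]) (n d : ℕ) :
    (diffOperator a (X ^ (n + d))).coeff n =
      ∑ ν ∈ range (n + 1), ((n + d).choose (n + d - ν) : K) * (a (n + d - ν)).coeff (n - ν) := by
  rw [coeff_diffOperator_X_pow_add, ← sum_range_reflect]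
  refine sum_congr rfl fun ν hν => ?_
  have := mem_range.1 hν
  rw [show d + (n + 1 - 1 - ν) = n + d - ν by omega, show n + 1 - 1 - ν = n - ν by omega]

theorem coeff_eq_zero_of_forall_coeff_diffOperator_X_pow_add_eq_zero {a : ℕ → K[X]} {d : ℕ}
    (h : ∀ n, (diffOperator a (X ^ (n + d))).coeff n = 0) (i : ℕ) : (a (d + i)).coeff i = 0 :=
  eq_zero_of_forall_sum_range_mul_eq_zero (c := fun n i => ((n + d).choose (d + i) : K))
    (f := fun i => (a (d + i)).coeff i) (fun n => by simp [add_comm n d])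
    (fun n => coeff_diffOperator_X_pow_add a n d ▸ h n) i

theorem degreeDropsBy_diffOperator_X_pow_iff {a : ℕ → K[X]} (hdeg : ∀ ν, (a ν).degree ≤ ν)
    (k : ℕ) : DegreeDropsBy k (fun m => diffOperator a (X ^ m)) ↔ DegreeDropsBy k a := by
  refine ⟨fun h ν j hνj => ?_, fun h m j hmj => ?_⟩
  · rcases lt_or_ge ν j with hνj' | hjν
    · exact coeff_eq_zero_of_degree_lt ((hdeg ν).trans_lt (by exact_mod_cast hνj'))
    · obtain ⟨d, rfl⟩ : ∃ d, ν = d + j := ⟨ν - j, by omega⟩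
      exact coeff_eq_zero_of_forall_coeff_diffOperator_X_pow_add_eq_zero
        (fun n => h (n + d) n (by omega)) j
  · show (diffOperator a (X ^ m)).coeff j = 0
    rw [diffOperator_X_pow, finsetSum_coeff]
    refine sum_eq_zero fun ν hν => ?_
    rw [coeff_smul, coeff_mul_X_pow']
    split_ifs with hle
    · rw [h ν _ (by have := mem_range.1 hν; omega), smul_zero]
    · rw [smul_zero]

end DiffOperator

theorem stmt10 (a : ℕ → Polynomial ℂ) (hdeg : ∀ ν, (a ν).degree ≤ (ν : ℕ))
    (J : Polynomial ℂ → Polynomial ℂ)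
    (hJ : ∀ p, J p = ∑ ν ∈ Finset.range (p.natDegree + 1),
        ((Nat.factorial ν : ℂ))⁻¹ • (a ν * Polynomial.derivative^[ν] p))
    (k : ℕ) :
    ((J (Polynomial.X ^ k) = Polynomial.C ((a k).coeff 0) ∧ (a k).coeff 0 ≠ 0) ∧
      (∀ n : ℕ, (J (Polynomial.X ^ (n + k))).degree = (n : ℕ)) ∧
      (∀ i < k, J (Polynomial.X ^ i) = 0)) ↔
    ((∀ ν < k, a ν = 0) ∧
      (∀ ν, k ≤ ν → (a ν).degree ≤ ((ν - k : ℕ) : ℕ)) ∧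
      (∀ n : ℕ, (∑ ν ∈ Finset.range (n + 1),
          ((n + k).choose (n + k - ν) : ℂ) * (a (n + k - ν)).coeff (n - ν)) ≠ 0)) := by
  obtain rfl : J = diffOperator a := funext hJ
  have htop (n : ℕ) := (coeff_diffOperator_X_pow_add' a n k).symm
  constructor
  · rintro ⟨-, hdegJ, hvan⟩
    have hdrop : DegreeDropsBy k (fun m => diffOperator a (X ^ m)) := by
      refine (degreeDropsBy_iff _ _).2 ⟨hvan, fun m hm => ?_⟩
      obtain ⟨n, rfl⟩ := Nat.exists_eq_add_of_le' hm
      simpa using (hdegJ n).le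
    obtain ⟨ha, hb⟩ :=
      (degreeDropsBy_iff k a).1 ((degreeDropsBy_diffOperator_X_pow_iff hdeg k).1 hdrop)
    exact ⟨ha, hb, fun n => htop n ▸ coeff_ne_zero_of_eq_degree (hdegJ n)⟩
  · rintro ⟨ha, hb, hc⟩
    obtain ⟨hvan, hle⟩ := (degreeDropsBy_iff _ _).1
      ((degreeDropsBy_diffOperator_X_pow_iff hdeg k).2 ((degreeDropsBy_iff k a).2 ⟨ha, hb⟩))
    have hdegJ (n : ℕ) : (diffOperator a (X ^ (n + k))).degree = n :=
      degree_eq_of_le_of_coeff_ne_zero (by simpa using hle (n + k) (by omega)) (htop n ▸ hc n)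
    have hk0 : (a k).coeff 0 = (diffOperator a (X ^ k)).coeff 0 := by simpa using htop 0
    refine ⟨⟨?_, by simpa using hc 0⟩, hdegJ, hvan⟩
    rw [hk0]
    exact eq_C_of_degree_le_zero (by simpa using (hdegJ 0).le)
end

section
/- With the notation of the previous setting (J a lowering operator of order k, {P_n} an MPS with dual sequence {u_n}, P̃_n = (λ_{n+k}^{[k]})^{−1}J(P_{n+k})), we have P̃_n = P_n for all n ≥ 0 if and only if ᵗJ(u_n) = λ_{n+k}^{[k]} u_{n+k} for all n ≥ 0. -/
open Polynomial

noncomputable def pmulForm (w : Polynomial ℂ) (u : Module.Dual ℂ (Polynomial ℂ)) :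
    Module.Dual ℂ (Polynomial ℂ) :=
  u ∘ₗ (LinearMap.mulLeft ℂ w)

noncomputable def formD (u : Module.Dual ℂ (Polynomial ℂ)) :
    Module.Dual ℂ (Polynomial ℂ) :=
  -(u ∘ₗ (Polynomial.derivative : Polynomial ℂ →ₗ[ℂ] Polynomial ℂ))

/-!
Everything is tested on the basis `{P_m}` of `ℂ[X]` and against its dual sequence, which
separates polynomials. `J` is linear and kills `P_m` for `m < k` (as `a_ν = 0` for `ν < k`), so
`ᵗJ(u_n) = λ_{n+k} u_{n+k}` amounts to `u_n(J P_m) = λ_{n+k} δ_{m,n+k}` for `m ≥ k`, and so does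
`J P_{n+k} = λ_{n+k} P_n` once both sides are paired with every `u_m`.
-/

theorem Module.Basis.coord_eq_of_apply_eq_ite {ι R M : Type*} [CommSemiring R] [AddCommMonoid M]
    [Module R M] [DecidableEq ι] (b : Basis ι R M) {f : Module.Dual R M} {i : ι}
    (hf : ∀ j, f (b j) = if i = j then 1 else 0) : f = b.coord i :=
  b.ext fun j => by simp [hf, Finsupp.single_apply, eq_comm]

namespace Polynomial

noncomputable def Sequence.ofMonic {R : Type*} [Semiring R] [Nontrivial R] (P : ℕ → R[X])
    (hmonic : ∀ n, (P n).Monic) (hdeg : ∀ n, (P n).natDegree = n) : Sequence R where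
  elems' := P
  degree_eq' n := by rw [degree_eq_natDegree (hmonic n).ne_zero, hdeg]

noncomputable def basisOfMonic {R : Type*} [CommRing R] [IsDomain R] (P : ℕ → R[X])
    (hmonic : ∀ n, (P n).Monic) (hdeg : ∀ n, (P n).natDegree = n) : Module.Basis ℕ R R[X] :=
  (Sequence.ofMonic P hmonic hdeg).basis fun n => by
    simp [Sequence.ofMonic, (hmonic n).leadingCoeff]

@[simp]
theorem basisOfMonic_apply {R : Type*} [CommRing R] [IsDomain R] (P : ℕ → R[X])
    (hmonic : ∀ n, (P n).Monic) (hdeg : ∀ n, (P n).natDegree = n) (n : ℕ) :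
    basisOfMonic P hmonic hdeg n = P n :=
  Sequence.basis_eq_self _ _ n

section DifferentialOperator

variable {K : Type*} [Field K] {a : ℕ → K[X]} {J : K[X] → K[X]}

theorem eq_sum_range_of_natDegree_lt
    (hJ : ∀ p, J p = ∑ ν ∈ Finset.range (p.natDegree + 1),
        ((Nat.factorial ν : K))⁻¹ • (a ν * derivative^[ν] p))
    {p : K[X]} {N : ℕ} (hN : p.natDegree < N) :
    J p = ∑ ν ∈ Finset.range N, ((Nat.factorial ν : K))⁻¹ • (a ν * derivative^[ν] p) := by
  rw [hJ p]
  refine Finset.sum_subset (Finset.range_subset_range.mpr hN) fun ν _ hν => ?_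
  rw [Finset.mem_range, not_lt] at hν
  rw [iterate_derivative_eq_zero (by omega), mul_zero, smul_zero]

theorem isLinearMap_of_eq_sum_iterate_derivative
    (hJ : ∀ p, J p = ∑ ν ∈ Finset.range (p.natDegree + 1),
        ((Nat.factorial ν : K))⁻¹ • (a ν * derivative^[ν] p)) :
    IsLinearMap K J where
  map_add p q := by
    have hN : ∀ r ∈ [p, q, p + q], r.natDegree < max p.natDegree q.natDegree + 1 := by
      simpa [Nat.lt_succ_iff] using natDegree_add_le p q
    simp only [List.mem_cons, List.not_mem_nil, or_false, forall_eq_or_imp, forall_eq] at hN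
    rw [eq_sum_range_of_natDegree_lt hJ hN.1, eq_sum_range_of_natDegree_lt hJ hN.2.1,
      eq_sum_range_of_natDegree_lt hJ hN.2.2, ← Finset.sum_add_distrib]
    simp only [iterate_map_add, mul_add, smul_add]
  map_smul c p := by
    have hN : (c • p).natDegree < p.natDegree + 1 := Nat.lt_succ_of_le (natDegree_smul_le c p)
    rw [eq_sum_range_of_natDegree_lt hJ hN, hJ p, Finset.smul_sum]
    simp only [iterate_derivative_smul, mul_smul_comm, smul_comm c]

theorem eq_zero_of_natDegree_lt_order
    (hJ : ∀ p, J p = ∑ ν ∈ Finset.range (p.natDegree + 1),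
        ((Nat.factorial ν : K))⁻¹ • (a ν * derivative^[ν] p))
    {k : ℕ} (ha : ∀ ν < k, a ν = 0) {p : K[X]} (hp : p.natDegree < k) : J p = 0 := by
  rw [hJ p]
  refine Finset.sum_eq_zero fun ν hν => ?_
  rw [ha ν (by rw [Finset.mem_range] at hν; omega), zero_mul, smul_zero]

end DifferentialOperator

end Polynomial

theorem stmt12_general (k : ℕ) (a : ℕ → Polynomial ℂ)
    (J : Polynomial ℂ → Polynomial ℂ)
    (hJ : ∀ p, J p = ∑ ν ∈ Finset.range (p.natDegree + 1),
        ((Nat.factorial ν : ℂ))⁻¹ • (a ν * Polynomial.derivative^[ν] p))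
    (ha : ∀ ν < k, a ν = 0)
    (lam : ℕ → ℂ)
    (hlamne : ∀ n, lam n ≠ 0)
    (P : ℕ → Polynomial ℂ) (hmonic : ∀ n, (P n).Monic) (hdeg : ∀ n, (P n).natDegree = n)
    (u : ℕ → Module.Dual ℂ (Polynomial ℂ))
    (hdual : ∀ n m, u n (P m) = if n = m then 1 else 0)
    (Pt : ℕ → Polynomial ℂ) (hPt : ∀ n, Pt n = (lam n)⁻¹ • J (P (n + k))) :
    (∀ n, Pt n = P n) ↔
      (∀ n, ∀ f : Polynomial ℂ, u n (J f) = lam n * u (n + k) f) := by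
  set b := basisOfMonic P hmonic hdeg
  have hb : ∀ m, b m = P m := basisOfMonic_apply P hmonic hdeg
  have hu : ∀ n, u n = b.coord n := fun n =>
    b.coord_eq_of_apply_eq_ite fun m => by rw [hb, hdual]
  let Jₗ := IsLinearMap.mk' J (isLinearMap_of_eq_sum_iterate_derivative hJ)
  constructor
  · intro hPtP n
    have hJP : ∀ m, J (P (m + k)) = lam m • P m := fun m => by
      rw [← hPtP m, hPt, smul_inv_smul₀ (hlamne m)]
    have hform : (u n).comp Jₗ = lam n • u (n + k) := b.ext fun m => by
      obtain hm | ⟨m, rfl⟩ : m < k ∨ ∃ j, m = j + k :=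
        (lt_or_ge m k).imp_right fun h => ⟨m - k, (Nat.sub_add_cancel h).symm⟩
      · simp [Jₗ, hb, eq_zero_of_natDegree_lt_order hJ ha (p := P m) (by rwa [hdeg]), hdual,
          show n + k ≠ m by omega]
      · simp only [Jₗ, IsLinearMap.mk'_apply, LinearMap.comp_apply, LinearMap.smul_apply, hb,
          hJP, map_smul, hdual, add_left_inj, smul_eq_mul]
        split_ifs with h <;> simp [h]
    exact fun f => LinearMap.congr_fun hform f
  · intro hdualJ n
    rw [hPt, ← sub_eq_zero, ← b.forall_coord_eq_zero_iff]
    intro m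
    rw [← hu, map_sub, map_smul, hdualJ, hdual, hdual]
    split_ifs <;> simp_all

theorem stmt12 (k : ℕ) (a : ℕ → Polynomial ℂ)
    (J : Polynomial ℂ → Polynomial ℂ)
    (hJ : ∀ p, J p = ∑ ν ∈ Finset.range (p.natDegree + 1),
        ((Nat.factorial ν : ℂ))⁻¹ • (a ν * Polynomial.derivative^[ν] p))
    (ha : ∀ ν < k, a ν = 0)
    (hadeg : ∀ ν, k ≤ ν → (a ν).degree ≤ ((ν - k : ℕ) : ℕ))
    (lam : ℕ → ℂ)
    (hlam : ∀ n, lam n = ∑ ν ∈ Finset.range (n + 1),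
        ((n + k).choose (n + k - ν) : ℂ) * (a (n + k - ν)).coeff (n - ν))
    (hlamne : ∀ n, lam n ≠ 0)
    (P : ℕ → Polynomial ℂ) (hmonic : ∀ n, (P n).Monic) (hdeg : ∀ n, (P n).natDegree = n)
    (u : ℕ → Module.Dual ℂ (Polynomial ℂ))
    (hdual : ∀ n m, u n (P m) = if n = m then 1 else 0)
    (Pt : ℕ → Polynomial ℂ) (hPt : ∀ n, Pt n = (lam n)⁻¹ • J (P (n + k))) :
    (∀ n, Pt n = P n) ↔
      (∀ n, ∀ f : Polynomial ℂ, u n (J f) = lam n * u (n + k) f) :=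
  stmt12_general k a J hJ ha lam hlamne P hmonic hdeg u hdual Pt hPt
end

section
/- Let {P_n} be a monic polynomial sequence. Then {P_n} is 2-orthogonal with respect to the canonical pair (u_0, u_1) of its dual sequence if and only if it satisfies a third-order recurrence: P_0 = 1, P_1(x) = x − β_0, P_2(x) = (x − β_1)P_1(x) − α_1, and P_{n+3}(x) = (x − β_{n+2})P_{n+2}(x) − α_{n+2}P_{n+1}(x) − γ_{n+1}P_n(x) for n ≥ 0, with γ_{n+1} ≠ 0 for all n ≥ 0. -/
open Polynomial

theorem stmt13 (P : ℕ → Polynomial ℂ)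
    (hmonic : ∀ n, (P n).Monic) (hdeg : ∀ n, (P n).natDegree = n)
    (u : ℕ → Module.Dual ℂ (Polynomial ℂ))
    (hdual : ∀ n m, u n (P m) = if n = m then 1 else 0) :
    (∀ ν ≤ 1, (∀ m n : ℕ, 2 * m + ν + 1 ≤ n → u ν (P m * P n) = 0) ∧
        (∀ m : ℕ, u ν (P m * P (2 * m + ν)) ≠ 0)) ↔
      ∃ β α γ : ℕ → ℂ, (∀ n, γ (n + 1) ≠ 0) ∧
        P 0 = 1 ∧ P 1 = Polynomial.X - Polynomial.C (β 0) ∧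
        P 2 = (Polynomial.X - Polynomial.C (β 1)) * P 1 - Polynomial.C (α 1) ∧
        ∀ n, P (n + 3) = (Polynomial.X - Polynomial.C (β (n + 2))) * P (n + 2)
            - Polynomial.C (α (n + 2)) * P (n + 1) - Polynomial.C (γ (n + 1)) * P n := by
  have uC : ∀ (k : ℕ) (a : ℂ) (p : Polynomial ℂ), u k (Polynomial.C a * p) = a * u k p := by
    intro k a p; rw [← Polynomial.smul_eq_C_mul, map_smul, smul_eq_mul]
  have hP0 : P 0 = 1 := (hmonic 0).natDegree_eq_zero.mp (hdeg 0)
  have expand : ∀ (d : ℕ) (q : Polynomial ℂ), q.natDegree ≤ d →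
      q = ∑ k ∈ Finset.range (d+1), Polynomial.C (u k q) * P k := by
    intro d
    induction d with
    | zero =>
      intro q hq
      have hqC : q = Polynomial.C (q.coeff 0) := eq_C_of_natDegree_le_zero hq
      have h1 : u 0 q = q.coeff 0 := by
        conv_lhs => rw [hqC, show Polynomial.C (q.coeff 0) = Polynomial.C (q.coeff 0) * P 0 from by
          rw [hP0, mul_one]]
        rw [uC, hdual]; simp
      rw [Finset.sum_range_one, hP0, mul_one, h1, ← hqC]
    | succ d ihd =>
      intro q hq
      set a := q.coeff (d+1) with ha
      have hPlc : (P (d+1)).coeff (d+1) = 1 := by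
        have := (hmonic (d+1)).leadingCoeff
        rwa [Polynomial.leadingCoeff, hdeg] at this
      have hco : (q - Polynomial.C a * P (d+1)).coeff (d+1) = 0 := by
        rw [Polynomial.coeff_sub, Polynomial.coeff_C_mul, hPlc, mul_one, ← ha, sub_self]
      have hrd : (q - Polynomial.C a * P (d+1)).natDegree ≤ d := by
        apply natDegree_le_iff_coeff_eq_zero.mpr
        intro m hm
        rcases Nat.lt_or_ge (d+1) m with h | h
        · rw [Polynomial.coeff_sub, Polynomial.coeff_C_mul]
          rw [Polynomial.coeff_eq_zero_of_natDegree_lt (lt_of_le_of_lt hq h),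
            Polynomial.coeff_eq_zero_of_natDegree_lt (by rw [hdeg]; exact h), mul_zero, sub_zero]
        · have : m = d + 1 := by omega
          rw [this]; exact hco
      have hrexp := ihd _ hrd
      have huk : ∀ k, k ∈ Finset.range (d+1) → 
          Polynomial.C (u k (q - Polynomial.C a * P (d+1))) * P k = Polynomial.C (u k q) * P k := by
        intro k hk
        rw [map_sub, uC, hdual, if_neg (by simp at hk; omega), mul_zero, sub_zero]
      have hud : u (d+1) q = a := by
        have h1 : u (d+1) (q - Polynomial.C a * P (d+1)) = 0 := by
          conv_lhs => rw [hrexp]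
          rw [map_sum]
          apply Finset.sum_eq_zero
          intro k hk
          rw [uC, hdual, if_neg (by simp at hk; omega), mul_zero]
        have h2 : u (d+1) q - a * u (d+1) (P (d+1)) = 0 := by
          rw [← uC, ← map_sub]; exact h1
        rw [hdual, if_pos rfl, mul_one] at h2
        exact sub_eq_zero.mp h2
      rw [Finset.sum_range_succ, hud]
      conv_lhs => rw [show q = (q - Polynomial.C a * P (d+1)) + Polynomial.C a * P (d+1) from by ring,
        hrexp]
      rw [Finset.sum_congr rfl huk]
  have u_high : ∀ (k : ℕ) (q : Polynomial ℂ), q.natDegree < k → u k q = 0 := by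
    intro k q h
    have hexp := expand q.natDegree q le_rfl
    calc u k q = u k (∑ i ∈ Finset.range (q.natDegree + 1), Polynomial.C (u i q) * P i) := by
          rw [← hexp]
      _ = 0 := by
          rw [map_sum]
          apply Finset.sum_eq_zero
          intro i hi
          rw [uC, hdual, if_neg (by simp at hi; omega), mul_zero]
  have deg_sub : ∀ N : ℕ, (Polynomial.X * P N - P (N+1)).natDegree ≤ N := by
    intro N
    by_cases h0 : Polynomial.X * P N - P (N+1) = 0
    · simp [h0]
    · have hne : Polynomial.X * P N ≠ 0 := mul_ne_zero Polynomial.X_ne_zero (hmonic N).ne_zero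
      have hm : (Polynomial.X * P N).natDegree = N + 1 := by
        rw [Polynomial.natDegree_mul Polynomial.X_ne_zero (hmonic N).ne_zero,
          Polynomial.natDegree_X, hdeg]; omega
      have hd1 : (Polynomial.X * P N).degree = ((N+1 : ℕ) : WithBot ℕ) := by
        rw [Polynomial.degree_eq_natDegree hne, hm]
      have hd2 : (P (N+1)).degree = ((N+1:ℕ) : WithBot ℕ) := by
        rw [Polynomial.degree_eq_natDegree (hmonic _).ne_zero, hdeg]
      have hlt := Polynomial.degree_sub_lt (hd1.trans hd2.symm) hne
        (by rw [(monic_X.mul (hmonic N)).leadingCoeff, (hmonic (N+1)).leadingCoeff])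
      rw [hd1] at hlt
      have := (Polynomial.natDegree_lt_iff_degree_lt h0).mpr hlt
      omega
  have star : ∀ N : ℕ, Polynomial.X * P N
      = P (N+1) + ∑ k ∈ Finset.range (N+1), Polynomial.C (u k (Polynomial.X * P N)) * P k := by
    intro N
    have hexp := expand N _ (deg_sub N)
    have hco : ∀ k ∈ Finset.range (N+1),
        Polynomial.C (u k (Polynomial.X * P N - P (N+1))) * P k
          = Polynomial.C (u k (Polynomial.X * P N)) * P k := by
      intro k hk
      rw [map_sub, hdual, if_neg (by simp at hk; omega), sub_zero]
    rw [Finset.sum_congr rfl hco] at hexp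
    linear_combination hexp
  have one_top : ∀ m : ℕ, u (m+1) (Polynomial.X * P m) = 1 := by
    intro m
    have h := u_high (m+1) _ (lt_of_le_of_lt (deg_sub m) (by omega))
    rw [map_sub, hdual, if_pos rfl] at h
    linear_combination h
  constructor
  · intro H
    have H0 : ∀ ν m n : ℕ, ν ≤ 1 → 2*m+ν+1 ≤ n → u ν (P m * P n) = 0 :=
      fun ν m n hν hn => (H ν hν).1 m n hn
    have H1 : ∀ ν m : ℕ, ν ≤ 1 → u ν (P m * P (2*m+ν)) ≠ 0 :=
      fun ν m hν => (H ν hν).2 m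
    -- key identity
    have key : ∀ k N : ℕ, k ≤ N →
        u (k % 2) (P (k/2) * (Polynomial.X * P N))
          = ∑ j ∈ Finset.range (k+1), u j (Polynomial.X * P N) * u (k % 2) (P (k/2) * P j) := by
      intro k N hkN
      have hν : k % 2 ≤ 1 := by omega
      have hk : 2 * (k/2) + k % 2 = k := Nat.div_add_mod k 2
      have hdX : (Polynomial.X * P N).natDegree ≤ N + 1 := by
        rw [Polynomial.natDegree_mul Polynomial.X_ne_zero (hmonic N).ne_zero,
          Polynomial.natDegree_X, hdeg]; omega
      have hexp := expand (N+1) _ hdX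
      calc u (k % 2) (P (k/2) * (Polynomial.X * P N))
          = u (k % 2) (∑ j ∈ Finset.range (N+2),
              Polynomial.C (u j (Polynomial.X * P N)) * (P (k/2) * P j)) := by
            conv_lhs => rw [hexp]
            rw [Finset.mul_sum]
            congr 1
            refine Finset.sum_congr rfl fun j hj => by ring
        _ = ∑ j ∈ Finset.range (N+2), u j (Polynomial.X * P N) * u (k % 2) (P (k/2) * P j) := by
            rw [map_sum]
            exact Finset.sum_congr rfl fun j hj => uC _ _ _
        _ = ∑ j ∈ Finset.range (k+1), u j (Polynomial.X * P N) * u (k % 2) (P (k/2) * P j) := by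
            refine (Finset.sum_subset (Finset.range_subset_range.mpr (by omega)) ?_).symm
            intro j hj hj'
            rw [H0 (k % 2) (k/2) j hν (by simp at hj hj'; omega), mul_zero]
    have key2 : ∀ k N : ℕ, k + 3 ≤ N → u (k % 2) (P (k/2) * (Polynomial.X * P N)) = 0 := by
      intro k N h3
      have hν : k % 2 ≤ 1 := by omega
      have hk : 2 * (k/2) + k % 2 = k := Nat.div_add_mod k 2
      have hdXm : (Polynomial.X * P (k/2)).natDegree ≤ k/2 + 1 := by
        rw [Polynomial.natDegree_mul Polynomial.X_ne_zero (hmonic _).ne_zero,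
          Polynomial.natDegree_X, hdeg]; omega
      have hexp := expand (k/2+1) _ hdXm
      rw [show P (k/2) * (Polynomial.X * P N) = (Polynomial.X * P (k/2)) * P N from by ring]
      conv_lhs => rw [hexp]
      rw [Finset.sum_mul, map_sum]
      apply Finset.sum_eq_zero
      intro i hi
      rw [mul_assoc, uC, H0 (k % 2) i N hν (by simp at hi; omega), mul_zero]
    have key2' : ∀ k : ℕ,
        u (k % 2) (P (k/2) * (Polynomial.X * P (k+2)))
          = u (k % 2) (P (k/2+1) * P (k+2)) := by
      intro k
      have hν : k % 2 ≤ 1 := by omega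
      have hk : 2 * (k/2) + k % 2 = k := Nat.div_add_mod k 2
      have hdXm : (Polynomial.X * P (k/2)).natDegree ≤ k/2 + 1 := by
        rw [Polynomial.natDegree_mul Polynomial.X_ne_zero (hmonic _).ne_zero,
          Polynomial.natDegree_X, hdeg]; omega
      have hexp := expand (k/2+1) _ hdXm
      rw [show P (k/2) * (Polynomial.X * P (k+2)) = (Polynomial.X * P (k/2)) * P (k+2) from by ring]
      conv_lhs => rw [hexp]
      rw [Finset.sum_mul, map_sum, Finset.sum_range_succ]
      rw [Finset.sum_eq_zero (fun i hi => by
        rw [mul_assoc, uC, H0 (k % 2) i (k+2) hν (by simp at hi; omega), mul_zero]), zero_add]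
      rw [mul_assoc, uC, one_top, one_mul]
    have F1 : ∀ k N : ℕ, k + 3 ≤ N → u k (Polynomial.X * P N) = 0 := by
      intro k
      induction k using Nat.strong_induction_on with
      | _ k ih =>
        intro N hN
        have hν : k % 2 ≤ 1 := by omega
        have hk : 2 * (k/2) + k % 2 = k := Nat.div_add_mod k 2
        have hkey := key k N (by omega)
        rw [key2 k N hN, Finset.sum_range_succ,
          Finset.sum_eq_zero (fun j hj => by
            rw [ih j (by simp at hj; omega) N (by simp at hj; omega), zero_mul]),
          zero_add] at hkey
        have hne : u (k % 2) (P (k/2) * P k) ≠ 0 := by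
          have := H1 (k % 2) (k/2) hν
          rwa [hk] at this
        rcases mul_eq_zero.mp hkey.symm with h | h
        · exact h
        · exact absurd h hne
    have F2 : ∀ n : ℕ, u n (Polynomial.X * P (n+2)) ≠ 0 := by
      intro n
      have hν : n % 2 ≤ 1 := by omega
      have hk : 2 * (n/2) + n % 2 = n := Nat.div_add_mod n 2
      have hkey := key n (n+2) (by omega)
      rw [key2' n, Finset.sum_range_succ,
        Finset.sum_eq_zero (fun j hj => by
          rw [F1 j (n+2) (by simp at hj; omega), zero_mul]), zero_add] at hkey
      have hne : u (n % 2) (P (n/2+1) * P (n+2)) ≠ 0 := by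
        have := H1 (n % 2) (n/2+1) hν
        rwa [show 2*(n/2+1) + n % 2 = n + 2 from by omega] at this
      rw [hkey] at hne
      intro h
      rw [h, zero_mul] at hne
      exact hne rfl
    refine ⟨fun k => u k (Polynomial.X * P k), fun k => u (k-1) (Polynomial.X * P k),
      fun k => u (k-1) (Polynomial.X * P (k+1)), ?_, hP0, ?_, ?_, ?_⟩
    · intro n
      simpa using F2 n
    · have h := star 0
      rw [Finset.sum_range_one] at h
      simp only [hP0, mul_one] at h ⊢
      rw [show (0:ℕ)+1 = 1 from rfl] at h
      linear_combination -h
    · have h := star 1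
      rw [Finset.sum_range_succ, Finset.sum_range_one, hP0, mul_one] at h
      rw [show (1:ℕ)+1 = 2 from rfl] at h
      simp only [Nat.sub_self]
      linear_combination -h
    · intro n
      have h := star (n+2)
      rw [Finset.sum_range_succ, Finset.sum_range_succ, Finset.sum_range_succ,
        Finset.sum_eq_zero (fun k hk => by
          rw [F1 k (n+2) (by simp at hk; omega), map_zero, zero_mul]), zero_add] at h
      have e1 : n + 2 - 1 = n + 1 := by omega
      have e2 : n + 1 - 1 = n := by omega
      have e3 : n + 1 + 1 = n + 2 := by omega
      rw [show n+2+1 = n+3 from by omega] at h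
      simp only [e1, e2, e3]
      linear_combination -h
  · rintro ⟨β, α, γ, hγ, hp0, hP1, hP2, hrec⟩
    have hsplit : ∀ (p : Polynomial ℂ) (k ν : ℕ),
        u ν (p * (Polynomial.X * P (k+2)))
          = u ν (p * P (k+3)) + β (k+2) * u ν (p * P (k+2))
            + α (k+2) * u ν (p * P (k+1)) + γ (k+1) * u ν (p * P k) := by
      intro p k ν
      rw [show p * (Polynomial.X * P (k+2)) = p * P (k+3) + Polynomial.C (β (k+2)) * (p * P (k+2))
          + Polynomial.C (α (k+2)) * (p * P (k+1)) + Polynomial.C (γ (k+1)) * (p * P k) from by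
        rw [hrec k]; ring]
      rw [map_add, map_add, map_add, uC, uC, uC]
    have hstep : ∀ (M n ν : ℕ),
        u ν (P (M+3) * P n)
          = u ν (P (M+2) * (Polynomial.X * P n)) - β (M+2) * u ν (P (M+2) * P n)
            - α (M+2) * u ν (P (M+1) * P n) - γ (M+1) * u ν (P M * P n) := by
      intro M n ν
      rw [show P (M+3) * P n = P (M+2) * (Polynomial.X * P n)
          - Polynomial.C (β (M+2)) * (P (M+2) * P n) - Polynomial.C (α (M+2)) * (P (M+1) * P n)
          - Polynomial.C (γ (M+1)) * (P M * P n) from by rw [hrec M]; ring]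
      rw [map_sub, map_sub, map_sub, uC, uC, uC]
    have h1step : ∀ (n ν : ℕ),
        u ν (P 1 * P n) = u ν (P 0 * (Polynomial.X * P n)) - β 0 * u ν (P 0 * P n) := by
      intro n ν
      rw [show P 1 * P n = P 0 * (Polynomial.X * P n) - Polynomial.C (β 0) * (P 0 * P n) from by
        rw [hP1, hP0]; ring]
      rw [map_sub, uC]
    have h2step : ∀ (n ν : ℕ),
        u ν (P 2 * P n) = u ν (P 1 * (Polynomial.X * P n)) - β 1 * u ν (P 1 * P n)
          - α 1 * u ν (P 0 * P n) := by
      intro n ν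
      rw [show P 2 * P n = P 1 * (Polynomial.X * P n) - Polynomial.C (β 1) * (P 1 * P n)
          - Polynomial.C (α 1) * (P 0 * P n) from by rw [hP2, hP0]; ring]
      rw [map_sub, map_sub, uC, uC]
    have hud : ∀ (ν j : ℕ), ν < j → u ν (P 0 * P j) = 0 := by
      intro ν j h
      rw [hP0, one_mul, hdual, if_neg (by omega)]
    have AA : ∀ (m ν n : ℕ), ν ≤ 1 → 2*m+ν+1 ≤ n → u ν (P m * P n) = 0 := by
      intro m
      induction m using Nat.strong_induction_on with
      | _ m ih =>
        rcases m with _ | _ | _ | M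
        · intro ν n hν hn
          exact hud ν n (by omega)
        · intro ν n hν hn
          obtain ⟨k, rfl⟩ : ∃ k, n = k + 2 := ⟨n - 2, by omega⟩
          rw [h1step, hsplit (P 0) k ν, hud ν (k+3) (by omega), hud ν (k+2) (by omega),
            hud ν (k+1) (by omega), hud ν k (by omega)]
          ring
        · intro ν n hν hn
          obtain ⟨k, rfl⟩ : ∃ k, n = k + 2 := ⟨n - 2, by omega⟩
          have A1 := ih 1 (by omega)
          rw [h2step, hsplit (P 1) k ν, A1 ν (k+3) hν (by omega), A1 ν (k+2) hν (by omega),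
            A1 ν (k+1) hν (by omega), A1 ν k hν (by omega), hud ν (k+2) (by omega)]
          ring
        · intro ν n hν hn
          obtain ⟨k, rfl⟩ : ∃ k, n = k + 2 := ⟨n - 2, by omega⟩
          have A2 := ih (M+2) (by omega)
          have A1 := ih (M+1) (by omega)
          have A0 := ih M (by omega)
          rw [hstep, hsplit (P (M+2)) k ν, A2 ν (k+3) hν (by omega), A2 ν (k+2) hν (by omega),
            A2 ν (k+1) hν (by omega), A2 ν k hν (by omega), A1 ν (k+2) hν (by omega),
            A0 ν (k+2) hν (by omega)]
          ring
    have BB : ∀ (m ν : ℕ), ν ≤ 1 → u ν (P m * P (2*m+ν)) ≠ 0 := by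
      intro m
      induction m using Nat.strong_induction_on with
      | _ m ih =>
        rcases m with _ | _ | _ | M
        · intro ν hν
          rw [show 2*0+ν = ν from by omega, hP0, one_mul, hdual, if_pos rfl]
          exact one_ne_zero
        · intro ν hν
          rw [show 2*1+ν = ν+2 from by omega, h1step, hsplit (P 0) ν ν,
            hud ν (ν+3) (by omega), hud ν (ν+2) (by omega), hud ν (ν+1) (by omega),
            hP0, one_mul, hdual, if_pos rfl]
          simpa using hγ ν
        · intro ν hν
          rw [show 2*2+ν = (ν+2)+2 from by omega, h2step, hsplit (P 1) (ν+2) ν,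
            AA 1 ν (ν+2+3) hν (by omega), AA 1 ν (ν+2+2) hν (by omega),
            AA 1 ν (ν+2+1) hν (by omega), hud ν (ν+2+2) (by omega)]
          have B1 := ih 1 (by omega) ν hν
          rw [show 2*1+ν = ν+2 from by omega] at B1
          have hg : γ (ν+2+1) ≠ 0 := hγ (ν+2)
          simpa using mul_ne_zero hg B1
        · intro ν hν
          rw [show 2*(M+3)+ν = (2*M+ν+4)+2 from by omega, hstep,
            hsplit (P (M+2)) (2*M+ν+4) ν,
            AA (M+2) ν (2*M+ν+4+3) hν (by omega), AA (M+2) ν (2*M+ν+4+2) hν (by omega),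
            AA (M+2) ν (2*M+ν+4+1) hν (by omega), AA (M+1) ν (2*M+ν+4+2) hν (by omega),
            AA M ν (2*M+ν+4+2) hν (by omega)]
          have B2 := ih (M+2) (by omega) ν hν
          rw [show 2*(M+2)+ν = 2*M+ν+4 from by omega] at B2
          have hg : γ (2*M+ν+4+1) ≠ 0 := hγ (2*M+ν+4)
          simpa using mul_ne_zero hg B2
    intro ν hν
    exact ⟨fun m n hn => AA m ν n hν hn, fun m => BB m ν hν⟩
end

section
/- Let {P_n} be a 2-orthogonal monic polynomial sequence satisfying the recurrence P_{n+3}(x) = (x − β_{n+2})P_{n+2}(x) − α_{n+2}P_{n+1}(x) − γ_{n+1}P_n(x) (with initial conditions P_0 = 1, P_1 = x − β_0, P_2 = (x − β_1)P_1 − α_1 and γ_{n+1} ≠ 0). Then its dual sequence satisfies x u_n = u_{n−1} + β_n u_n + α_{n+1} u_{n+1} + γ_{n+1} u_{n+2} for n ≥ 0, with the convention u_{−1} = 0. -/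
open Polynomial

private lemma ite_coeff_shift (f : ℕ → ℂ) (a b c : ℕ) (hbc : a = b ↔ c = b)
    (hf : c = b → f a = f b) :
    f a * (if c = b then (1:ℂ) else 0) = f b * (if c = b then 1 else 0) := by
  split_ifs with h
  · rw [hf h]
  · ring

theorem stmt14 (P : ℕ → Polynomial ℂ)
    (hmonic : ∀ n, (P n).Monic) (hdeg : ∀ n, (P n).natDegree = n)
    (β α γ : ℕ → ℂ) (hγ : ∀ n, γ (n + 1) ≠ 0)
    (h0 : P 0 = 1) (h1 : P 1 = Polynomial.X - Polynomial.C (β 0))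
    (h2 : P 2 = (Polynomial.X - Polynomial.C (β 1)) * P 1 - Polynomial.C (α 1))
    (hrec : ∀ n, P (n + 3) = (Polynomial.X - Polynomial.C (β (n + 2))) * P (n + 2)
        - Polynomial.C (α (n + 2)) * P (n + 1) - Polynomial.C (γ (n + 1)) * P n)
    (u : ℕ → Module.Dual ℂ (Polynomial ℂ))
    (hdual : ∀ n m, u n (P m) = if n = m then 1 else 0) :
    ∀ n, ∀ p : Polynomial ℂ,
      u n (Polynomial.X * p) = (if n = 0 then 0 else u (n - 1) p)
        + β n * u n p + α (n + 1) * u (n + 1) p + γ (n + 1) * u (n + 2) p := by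
  have hspan : ∀ (k : ℕ) (p : Polynomial ℂ), p.natDegree ≤ k →
      p ∈ Submodule.span ℂ (Set.range P) := by
    intro k
    induction k with
    | zero =>
      intro p hp
      have hpc := Polynomial.eq_C_of_natDegree_le_zero hp
      have : p = p.coeff 0 • P 0 := by rw [h0, smul_eq_C_mul, mul_one]; exact hpc
      rw [this]
      exact Submodule.smul_mem _ _ (Submodule.subset_span ⟨0, rfl⟩)
    | succ k ih =>
      intro p hp
      set q := p - p.coeff (k+1) • P (k+1) with hq
      have hqc : q.coeff (k+1) = 0 := by
        have hP1 : (P (k+1)).coeff (k+1) = 1 := by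
          have := (hmonic (k+1)).leadingCoeff
          rwa [Polynomial.leadingCoeff, hdeg] at this
        simp [hq, hP1]
      have hqd : q.natDegree ≤ k := by
        by_cases h0' : q = 0
        · simp [h0']
        · have hle : q.natDegree ≤ k + 1 := by
            apply le_trans (Polynomial.natDegree_sub_le _ _)
            simp only [max_le_iff]
            exact ⟨hp, le_trans (Polynomial.natDegree_smul_le _ _) (by rw [hdeg])⟩
          have hne : q.natDegree ≠ k + 1 := by
            intro h
            exact Polynomial.leadingCoeff_ne_zero.mpr h0' (by rwa [Polynomial.leadingCoeff, h])
          omega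
      have hpq : p = q + p.coeff (k+1) • P (k+1) := by rw [hq]; ring
      rw [hpq]
      exact Submodule.add_mem _ (ih q hqd)
        (Submodule.smul_mem _ _ (Submodule.subset_span ⟨k+1, rfl⟩))
  intro n p
  have hp : p ∈ Submodule.span ℂ (Set.range P) := hspan p.natDegree p le_rfl
  induction hp using Submodule.span_induction with
  | mem x hx =>
    obtain ⟨m, rfl⟩ := hx
    match m with
    | 0 =>
      have hX : X * P 0 = P 1 + β 0 • P 0 := by
        rw [h0, h1, smul_eq_C_mul]; ring
      rw [hX, map_add, map_smul, smul_eq_mul]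
      simp only [hdual]
      have eu : (if n = 0 then (0:ℂ) else if n - 1 = 0 then 1 else 0)
          = (if n = 1 then 1 else 0) := by split_ifs <;> first | rfl | omega
      have eβ := ite_coeff_shift β n 0 n Iff.rfl (fun h => by rw [h])
      have eα : α (n+1) * (if n + 1 = 0 then (1:ℂ) else 0) = 0 := by
        rw [if_neg (by omega)]; ring
      have eγ : γ (n+1) * (if n + 2 = 0 then (1:ℂ) else 0) = 0 := by
        rw [if_neg (by omega)]; ring
      rw [eu, eβ, eα, eγ]; ring
    | 1 =>
      have hX : X * P 1 = P 2 + β 1 • P 1 + α 1 • P 0 := by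
        rw [h2, h0, smul_eq_C_mul, smul_eq_C_mul]; ring
      rw [hX, map_add, map_add, map_smul, map_smul, smul_eq_mul, smul_eq_mul]
      simp only [hdual]
      have eu : (if n = 0 then (0:ℂ) else if n - 1 = 1 then 1 else 0)
          = (if n = 2 then 1 else 0) := by split_ifs <;> first | rfl | omega
      have eβ := ite_coeff_shift β n 1 n Iff.rfl (fun h => by rw [h])
      have eα : α (n+1) * (if n + 1 = 1 then (1:ℂ) else 0)
          = α 1 * (if n = 0 then 1 else 0) := by
        by_cases hn : n = 0
        · subst hn; rw [if_pos rfl, if_pos rfl]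
        · rw [if_neg (by omega), if_neg hn]; ring
      have eγ : γ (n+1) * (if n + 2 = 1 then (1:ℂ) else 0) = 0 := by
        rw [if_neg (by omega)]; ring
      rw [eu, eβ, eα, eγ]; ring
    | (k+2) =>
      have hX : X * P (k+2) = P (k+3) + β (k+2) • P (k+2) + α (k+2) • P (k+1)
          + γ (k+1) • P k := by
        rw [hrec k, smul_eq_C_mul, smul_eq_C_mul, smul_eq_C_mul]; ring
      rw [hX, map_add, map_add, map_add, map_smul, map_smul, map_smul,
        smul_eq_mul, smul_eq_mul, smul_eq_mul]
      simp only [hdual]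
      have eu : (if n = 0 then (0:ℂ) else if n - 1 = k + 2 then 1 else 0)
          = (if n = k + 3 then 1 else 0) := by split_ifs <;> first | rfl | omega
      have eβ := ite_coeff_shift β n (k+2) n Iff.rfl (fun h => by rw [h])
      have eα : α (n+1) * (if n + 1 = k + 2 then (1:ℂ) else 0)
          = α (k+2) * (if n = k + 1 then 1 else 0) := by
        by_cases hn : n = k + 1
        · subst hn; rw [if_pos rfl, if_pos rfl]
        · rw [if_neg (by omega), if_neg hn]; ring
      have eγ : γ (n+1) * (if n + 2 = k + 2 then (1:ℂ) else 0)
          = γ (k+1) * (if n = k then 1 else 0) := by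
        by_cases hn : n = k
        · subst hn; rw [if_pos rfl, if_pos rfl]
        · rw [if_neg (by omega), if_neg hn]; ring
      rw [eu, eβ, eα, eγ]; try ring
  | zero => simp
  | add x y _ _ hx hy =>
    rw [mul_add, map_add, hx, hy]
    simp only [map_add]
    by_cases hn : n = 0
    · simp only [hn, reduceIte]; ring
    · simp only [if_neg hn]; ring
  | smul c x _ hx =>
    rw [mul_smul_comm, map_smul, smul_eq_mul, hx]
    simp only [map_smul, smul_eq_mul]
    by_cases hn : n = 0
    · simp only [hn, reduceIte]; ring
    · simp only [if_neg hn]; ring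
end

section
/- Let (u_0, u_1) be a regular vector functional associated with a 2-orthogonal MPS {P_n} (i.e. {P_n} is 2-orthogonal with respect to (u_0, u_1)). If M and N are polynomials such that M u_0 = N u_1, then M = 0 and N = 0. -/
/-!
Expanding a polynomial `q` of degree `d` in the basis `P 0, …, P d` shows: if a functional `v`
satisfies `v (P m * P n) = 0` whenever `2 * m + s < n` and `v (P m * P (2 * m + s)) ≠ 0`, then
`v (q * P n)` vanishes for `n > 2 * d + s` but not for `n = 2 * d + s`. If `M u₀ = N u₁` with
`M ≠ 0`, testing against `P (2 * deg M)` forces `deg N ≥ deg M`, and then testing against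
`P (2 * deg N + 1)` gives a contradiction. Hence `M = 0`, so `N u₁ = 0`, which forces `N = 0`.
-/

open Polynomial

section MonicBasis

variable {R : Type*} [CommRing R] {P : ℕ → R[X]}

theorem degree_sub_C_coeff_mul_lt (hmonic : ∀ n, (P n).Monic) (hdeg : ∀ n, (P n).natDegree = n)
    {q : R[X]} {d : ℕ} (hq : q.degree < ↑(d + 1)) :
    (q - C (q.coeff d) * P d).degree < d := by
  have hPd : (P d).coeff d = 1 := by simpa [hdeg d] using (hmonic d).coeff_natDegree
  rw [degree_lt_iff_coeff_zero] at hq ⊢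
  intro m hm
  rcases hm.eq_or_lt with rfl | hlt
  · simp [hPd]
  · have hPm : (P d).coeff m = 0 := coeff_eq_zero_of_natDegree_lt (by rw [hdeg d]; exact hlt)
    simp [hq m hlt, hPm]

variable (hmonic : ∀ n, (P n).Monic) (hdeg : ∀ n, (P n).natDegree = n)
  {v : Module.Dual R R[X]} {s : ℕ}
include hmonic hdeg

theorem map_mul_eq_zero_of_degree_lt
    (hvanish : ∀ m n, 2 * m + s + 1 ≤ n → v (P m * P n) = 0) (d : ℕ) {q : R[X]} {n : ℕ}
    (hq : q.degree < d) (hn : 2 * d + s ≤ n + 1) : v (q * P n) = 0 := by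
  induction d generalizing q with
  | zero => rw [show q = 0 by simpa using hq, zero_mul, map_zero]
  | succ d ih =>
    have hsplit : q * P n = q.coeff d • (P d * P n) + (q - C (q.coeff d) * P d) * P n := by
      rw [smul_eq_C_mul]; ring
    rw [hsplit, map_add, map_smul, hvanish d n (by omega),
      ih (degree_sub_C_coeff_mul_lt hmonic hdeg hq) (by omega), smul_zero, add_zero]

theorem map_mul_eq_zero_of_natDegree_le
    (hvanish : ∀ m n, 2 * m + s + 1 ≤ n → v (P m * P n) = 0) {q : R[X]} {d n : ℕ}
    (hq : q.natDegree ≤ d) (hn : 2 * d + s + 1 ≤ n) : v (q * P n) = 0 :=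
  map_mul_eq_zero_of_degree_lt hmonic hdeg hvanish (d + 1)
    (Order.lt_succ_of_le (degree_le_of_natDegree_le hq)) (by omega)

theorem map_mul_ne_zero_of_ne_zero [NoZeroDivisors R]
    (hvanish : ∀ m n, 2 * m + s + 1 ≤ n → v (P m * P n) = 0)
    (hdiag : ∀ m, v (P m * P (2 * m + s)) ≠ 0) {q : R[X]} (hq : q ≠ 0) :
    v (q * P (2 * q.natDegree + s)) ≠ 0 := by
  set d := q.natDegree
  set n := 2 * d + s
  have hsplit : q * P n = q.leadingCoeff • (P d * P n) + (q - C (q.coeff d) * P d) * P n := by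
    rw [smul_eq_C_mul, leadingCoeff]; ring
  have hq' : q.degree < ↑(d + 1) :=
    Order.lt_succ_of_le (degree_le_natDegree (p := q))
  rw [hsplit, map_add, map_mul_eq_zero_of_degree_lt hmonic hdeg hvanish d
    (degree_sub_C_coeff_mul_lt hmonic hdeg hq') (by omega), add_zero, map_smul, smul_eq_mul]
  exact mul_ne_zero (leadingCoeff_ne_zero.mpr hq) (hdiag d)

end MonicBasis

theorem stmt16_general (P : ℕ → Polynomial ℂ)
    (hmonic : ∀ n, (P n).Monic) (hdeg : ∀ n, (P n).natDegree = n)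
    (u : ℕ → Module.Dual ℂ (Polynomial ℂ))
    (horth : ∀ ν ≤ 1, (∀ m n : ℕ, 2 * m + ν + 1 ≤ n → u ν (P m * P n) = 0) ∧
        (∀ m : ℕ, u ν (P m * P (2 * m + ν)) ≠ 0))
    (M N : Polynomial ℂ)
    (hMN : ∀ p : Polynomial ℂ, u 0 (M * p) = u 1 (N * p)) :
    M = 0 ∧ N = 0 := by
  obtain ⟨hvanish₀, hdiag₀⟩ := horth 0 zero_le_one
  obtain ⟨hvanish₁, hdiag₁⟩ := horth 1 le_rfl
  have hM : M = 0 := by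
    by_contra hM
    have hM' : u 1 (N * P (2 * M.natDegree)) ≠ 0 := by
      rw [← hMN]; exact map_mul_ne_zero_of_ne_zero hmonic hdeg hvanish₀ hdiag₀ hM
    have hN : N ≠ 0 := by rintro rfl; simp at hM'
    have hdeg_le : M.natDegree ≤ N.natDegree := by
      by_contra! hlt
      exact hM' (map_mul_eq_zero_of_degree_lt hmonic hdeg hvanish₁ M.natDegree
        (degree_le_natDegree.trans_lt (WithBot.coe_lt_coe.2 hlt)) le_rfl)
    refine map_mul_ne_zero_of_ne_zero hmonic hdeg hvanish₁ hdiag₁ hN ?_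
    rw [← hMN]
    exact map_mul_eq_zero_of_natDegree_le hmonic hdeg (s := 0) hvanish₀ hdeg_le (by omega)
  refine ⟨hM, by_contra fun hN => ?_⟩
  refine map_mul_ne_zero_of_ne_zero hmonic hdeg hvanish₁ hdiag₁ hN ?_
  rw [← hMN, hM, zero_mul, map_zero]

/-- If `(u_0, u_1)` is the regular pair of a 2-orthogonal MPS and `M u_0 = N u_1`,
then `M = 0` and `N = 0`. -/
theorem stmt16 (P : ℕ → Polynomial ℂ)
    (hmonic : ∀ n, (P n).Monic) (hdeg : ∀ n, (P n).natDegree = n)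
    (u : ℕ → Module.Dual ℂ (Polynomial ℂ))
    (hdual : ∀ n m, u n (P m) = if n = m then 1 else 0)
    (horth : ∀ ν ≤ 1, (∀ m n : ℕ, 2 * m + ν + 1 ≤ n → u ν (P m * P n) = 0) ∧
        (∀ m : ℕ, u ν (P m * P (2 * m + ν)) ≠ 0))
    (M N : Polynomial ℂ)
    (hMN : ∀ p : Polynomial ℂ, u 0 (M * p) = u 1 (N * p)) :
    M = 0 ∧ N = 0 :=
  stmt16_general P hmonic hdeg u horth M N hMN
end

section
/- Let J = a_0 I + a_1(x)D + (a_2(x)/2)D² + (a_3(x)/6)D³ be an isomorphism of polynomials and {P_n} a 2-orthogonal MPS with J(P_n) = λ_n^{[0]}P_n, λ_n^{[0]} ≠ 0. If a_2(x) = 0 and a_1(x) = −(1/(3γ_1))(x − β_0), then the dual sequence satisfies p_1(x) = 0, and in particular α_1 = 0, where p_1(x) = γ_1 A_0(x)(λ_1^{[0]} − λ_2^{[0]}) with A_0(x) = −α_1/γ_1. -/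
open Polynomial

/-- Under the first choice of coefficients (`a₂ = 0`, `a₁(x) = −(1/(3γ₁))(x−β₀)`),
the polynomial `p₁(x) = γ₁ A₀(x)(λ₁ − λ₂)` vanishes and in particular `α₁ = 0`. -/
theorem stmt18 (a0 : ℂ) (ha0 : a0 ≠ 0) (a1 a2 a3 : Polynomial ℂ)
    (h1 : a1.degree ≤ 1) (h2 : a2.degree ≤ 2) (h3 : a3.degree ≤ 3)
    (J : Polynomial ℂ → Polynomial ℂ)
    (hJ : ∀ p, J p = Polynomial.C a0 * p + a1 * Polynomial.derivative p
        + (2 : ℂ)⁻¹ • (a2 * Polynomial.derivative^[2] p)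
        + (6 : ℂ)⁻¹ • (a3 * Polynomial.derivative^[3] p))
    (hbij : Function.Bijective J)
    (P : ℕ → Polynomial ℂ) (hmonic : ∀ n, (P n).Monic) (hdeg : ∀ n, (P n).natDegree = n)
    (β α γ : ℕ → ℂ) (hγ : ∀ n, γ (n + 1) ≠ 0)
    (hP0 : P 0 = 1) (hP1 : P 1 = Polynomial.X - Polynomial.C (β 0))
    (hP2 : P 2 = (Polynomial.X - Polynomial.C (β 1)) * P 1 - Polynomial.C (α 1))
    (hrec : ∀ n, P (n + 3) = (Polynomial.X - Polynomial.C (β (n + 2))) * P (n + 2)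
        - Polynomial.C (α (n + 2)) * P (n + 1) - Polynomial.C (γ (n + 1)) * P n)
    (u : ℕ → Module.Dual ℂ (Polynomial ℂ))
    (hdual : ∀ n m, u n (P m) = if n = m then 1 else 0)
    (lam : ℕ → ℂ) (hlamne : ∀ n, lam n ≠ 0)
    (heig : ∀ n, J (P n) = lam n • P n)
    (ha2 : a2 = 0)
    (ha1 : a1 = (-(3 * γ 1)⁻¹) • (Polynomial.X - Polynomial.C (β 0))) :
    γ 1 * (-(α 1) / γ 1) * (lam 1 - lam 2) = 0 ∧ α 1 = 0 := by
  have hγ1 : γ 1 ≠ 0 := hγ 0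
  have hc : (γ 1)⁻¹ ≠ 0 := inv_ne_zero hγ1
  have hd3 : Polynomial.derivative^[3] (P 2) = 0 := by
    apply Polynomial.iterate_derivative_eq_zero
    rw [hdeg 2]; norm_num
  have E := heig 2
  rw [hJ, ha2, hd3] at E
  simp only [zero_mul, mul_zero, smul_zero, add_zero] at E
  rw [hP2, hP1, ha1] at E
  have H : ∀ t : ℂ, a0 * ((t - β 0) * (t - β 1) - α 1) +
      (-(3⁻¹ * ((t - β 0) * ((t - β 0) * (γ 1)⁻¹))) +
        -(3⁻¹ * ((t - β 0) * ((t - β 1) * (γ 1)⁻¹)))) =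
      ((t - β 0) * (t - β 1) - α 1) * lam 2 := by
    intro t
    have h := congrArg (Polynomial.eval t) E
    simpa [derivative_mul, mul_comm, mul_add, mul_assoc, mul_left_comm] using h
  have e1 := H (β 0)
  have e3 := H (β 0 + 2)
  have e5 := H (β 0 + 3)
  have hD : a0 - lam 2 = 2/3 * (γ 1)⁻¹ := by
    linear_combination (1/6 : ℂ) * e1 - (1/2 : ℂ) * e3 + (1/3 : ℂ) * e5
  have hal : (γ 1)⁻¹ * α 1 = 0 := by
    linear_combination (-(3/2) : ℂ) * e1 - (3/2 : ℂ) * (α 1) * hD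
  have hα : α 1 = 0 := by
    rcases mul_eq_zero.mp hal with h | h
    · exact absurd h hc
    · exact h
  exact ⟨by simp [hα], hα⟩
end
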